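/- arXiv:math/0101068 — 5 statements merged into one kernel-verified Lean document; each statement's English description precedes it below -/
import Mathlib

section
/- Let L be a complex Hilbert space and G a group of unitary operators on L (a subgroup of the unitary group of L, not necessarily abelian). Let (M, D) be a linear operator with dense domain D ⊆ L which is symmetric (⟨φ, M ψ⟩ = ⟨M φ, ψ⟩ for all φ, ψ ∈ D) and commutes with G (for every U ∈ G and φ ∈ D, Uφ ∈ D and M(Uφ) = U(Mφ)). If the von Neumann algebra of all bounded operators on L commuting with every element of G is commutative, then (M, D) is essentially self-adjoint: it is closable and its closure is self-adjoint. -/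
/-!
`M` is closable because it is contained in its adjoint, which is closed. Its closure `A` is closed,
symmetric and still commutes with `G`. Symmetry gives `‖(A + i)x‖ = ‖(A - i)x‖ ≥ ‖x‖`, so, `A` being
closed, the ranges `R₊ = ran (A + i)` and `R₋ = ran (A - i)` are closed, and the Cayley transform
`(A + i)x ↦ (A - i)x`, extended by `0` on `R₊ᗮ`, is a partial isometry `T` from `R₊` onto `R₋`.
Both `T` and the reverse partial isometry `S` commute with `G`, and `S T`, `T S` are the orthogonal
projections onto `R₊`, `R₋`; commutativity of the commutant therefore forces `R₊ = R₋`. A vector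
orthogonal to both ranges is orthogonal to `(A + i)x - (A - i)x = 2ix` for every `x` in the dense
domain, so `R₊ = R₋ = L`, and a symmetric operator with this property is self-adjoint.
-/

open LinearMap
open scoped InnerProductSpace NNReal ComplexConjugate

section Hilbert

variable {𝕜 E F V : Type*} [RCLike 𝕜] [NormedAddCommGroup E] [InnerProductSpace 𝕜 E]
  [NormedAddCommGroup F] [NormedSpace 𝕜 F] [AddCommGroup V] [Module 𝕜 V]

theorem exists_clm_apply_eq_of_starProjection_eq (f : V →ₗ[𝕜] E) (g : V →ₗ[𝕜] F)
    [(range f).HasOrthogonalProjection] (hgf : ∀ v, ‖g v‖ ≤ ‖f v‖) :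
    ∃ T : E →L[𝕜] F, ∀ x v, (range f).starProjection x = f v → T x = g v := by
  have hker : ker f ≤ ker g := fun v hv => by
    simpa [mem_ker.mp hv] using hgf v
  let T₀ : range f →ₗ[𝕜] F := (ker f).liftQ g hker ∘ₗ f.quotKerEquivRange.symm
  have hT₀ : ∀ v, T₀ ⟨f v, mem_range_self f v⟩ = g v := fun v => by
    simp [T₀, quotKerEquivRange_symm_apply_image]
  have hbound : ∀ u, ‖T₀ u‖ ≤ 1 * ‖u‖ := by
    rintro ⟨_, v, rfl⟩
    simpa [hT₀] using hgf v
  refine ⟨(T₀.mkContinuous 1 hbound).comp (range f).orthogonalProjectionOnto, fun x v hx => ?_⟩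
  have : (range f).orthogonalProjectionOnto x = ⟨f v, mem_range_self f v⟩ := Subtype.ext hx
  simp [this, hT₀]

variable (G : Subgroup (E ≃ₗᵢ[𝕜] E))

theorem Submodule.starProjection_apply_of_forall_mem (K : Submodule 𝕜 E)
    [K.HasOrthogonalProjection] (hK : ∀ U ∈ G, ∀ x ∈ K, U x ∈ K) {U : E ≃ₗᵢ[𝕜] E} (hU : U ∈ G)
    (x : E) : K.starProjection (U x) = U (K.starProjection x) := by
  have hmap : K.map (U.toLinearEquiv : E →ₗ[𝕜] E) = K := by
    refine le_antisymm ?_ fun y hy => ⟨U⁻¹ y, hK _ (inv_mem hU) y hy, ?_⟩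
    · rintro _ ⟨y, hy, rfl⟩
      exact hK U hU y hy
    · simp [LinearIsometryEquiv.coe_inv]
  simpa [hmap] using Submodule.starProjection_map_apply U K (U x)

theorem apply_map_eq_map_apply_of_starProjection_eq (f g : V →ₗ[𝕜] E)
    [(range f).HasOrthogonalProjection]
    (hG : ∀ U ∈ G, ∀ v, ∃ w, f w = U (f v) ∧ g w = U (g v)) {T : E →L[𝕜] E}
    (hT : ∀ x v, (range f).starProjection x = f v → T x = g v) {U : E ≃ₗᵢ[𝕜] E} (hU : U ∈ G)
    (x : E) : T (U x) = U (T x) := by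
  have hinv : ∀ U ∈ G, ∀ y ∈ range f, U y ∈ range f := by
    rintro U hU _ ⟨v, rfl⟩
    obtain ⟨w, hw, -⟩ := hG U hU v
    exact ⟨w, hw⟩
  obtain ⟨v, hv⟩ := (range f).starProjection_apply_mem x
  obtain ⟨w, hfw, hgw⟩ := hG U hU v
  have hUx : (range f).starProjection (U x) = f w := by
    rw [Submodule.starProjection_apply_of_forall_mem G _ hinv hU, ← hv, hfw]
  rw [hT _ _ hUx, hT _ _ hv.symm, hgw]

theorem range_eq_range_of_commutant_abelian (f g : V →ₗ[𝕜] E) [(range f).HasOrthogonalProjection]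
    [(range g).HasOrthogonalProjection] (hfg : ∀ v, ‖f v‖ = ‖g v‖)
    (hG : ∀ U ∈ G, ∀ v, ∃ w, f w = U (f v) ∧ g w = U (g v))
    (habelian : ∀ T S : E →L[𝕜] E,
      (∀ U ∈ G, ∀ x : E, T (U x) = U (T x)) →
      (∀ U ∈ G, ∀ x : E, S (U x) = U (S x)) →
      ∀ x : E, T (S x) = S (T x)) :
    range f = range g := by
  obtain ⟨T, hT⟩ := exists_clm_apply_eq_of_starProjection_eq f g fun v => (hfg v).ge
  obtain ⟨S, hS⟩ := exists_clm_apply_eq_of_starProjection_eq g f fun v => (hfg v).le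
  have hG' : ∀ U ∈ G, ∀ v, ∃ w, g w = U (g v) ∧ f w = U (f v) := fun U hU v =>
    (hG U hU v).imp fun _ => And.symm
  have hST : ∀ x, S (T x) = (range f).starProjection x := fun x => by
    obtain ⟨v, hv⟩ := (range f).starProjection_apply_mem x
    rw [hT x v hv.symm, hS _ v (Submodule.starProjection_eq_self_iff.mpr ⟨v, rfl⟩), hv]
  have hTS : ∀ x, T (S x) = (range g).starProjection x := fun x => by
    obtain ⟨v, hv⟩ := (range g).starProjection_apply_mem x
    rw [hS x v hv.symm, hT _ v (Submodule.starProjection_eq_self_iff.mpr ⟨v, rfl⟩), hv]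
  have hP : (range f).starProjection = (range g).starProjection := by
    ext x
    rw [← hST, ← hTS]
    exact (habelian T S (fun U hU => apply_map_eq_map_apply_of_starProjection_eq G f g hG hT hU)
      (fun U hU => apply_map_eq_map_apply_of_starProjection_eq G g f hG' hS hU) x).symm
  rw [← (range f).range_starProjection, hP, Submodule.range_starProjection]

end Hilbert

namespace LinearPMap

section Normed

variable {𝕜 E F : Type*} [RCLike 𝕜] [NormedAddCommGroup E] [NormedSpace 𝕜 E]
  [NormedAddCommGroup F] [NormedSpace 𝕜 F]

theorem IsClosed.vadd {A : E →ₗ.[𝕜] F} (hA : A.IsClosed) (f : E →L[𝕜] F) :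
    ((f : E →ₗ[𝕜] F) +ᵥ A).IsClosed := by
  have hgraph : (((f : E →ₗ[𝕜] F) +ᵥ A).graph : Set (E × F)) =
      (fun p : E × F => (p.1, p.2 - f p.1)) ⁻¹' A.graph := by
    ext ⟨x, y⟩
    simp only [SetLike.mem_coe, mem_graph_iff, Set.mem_preimage, vadd_apply, vadd_domain]
    constructor
    · rintro ⟨z, rfl, rfl⟩
      exact ⟨z, rfl, by simp⟩
    · rintro ⟨z, rfl, hz⟩
      exact ⟨z, rfl, by simp [hz]⟩
  unfold LinearPMap.IsClosed
  rw [hgraph]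
  exact hA.preimage (by fun_prop)

theorem IsClosed.isClosed_range [CompleteSpace E] [CompleteSpace F] {A : E →ₗ.[𝕜] F}
    (hA : A.IsClosed) {K : ℝ≥0} (hK : ∀ x : A.domain, ‖(x : E)‖ ≤ K * ‖A x‖) :
    _root_.IsClosed (range A.toFun : Set F) := by
  have : CompleteSpace A.graph := hA.completeSpace_coe
  let π : A.graph →L[𝕜] F := (ContinuousLinearMap.snd 𝕜 E F).comp A.graph.subtypeL
  have hπ : ∀ p, ‖p‖ ≤ max K 1 * ‖π p‖ := by
    rintro ⟨p, hp⟩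
    obtain ⟨x, rfl⟩ := (mem_graph_iff' A).mp hp
    change max ‖(x : E)‖ ‖A x‖ ≤ max K 1 * ‖A x‖
    refine max_le ((hK x).trans ?_) (le_mul_of_one_le_left (norm_nonneg _) ?_)
    · gcongr
      exact le_max_left _ _
    · simp
  have hrange : (range A.toFun : Set F) = Set.range π := by
    ext y
    constructor
    · rintro ⟨x, rfl⟩
      exact ⟨⟨_, A.mem_graph x⟩, rfl⟩
    · rintro ⟨⟨p, hp⟩, rfl⟩
      obtain ⟨x, rfl⟩ := (mem_graph_iff' A).mp hp
      exact ⟨x, rfl⟩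
  rw [hrange]
  exact (π.antilipschitz_of_bound hπ).isClosed_range π.uniformContinuous

theorem IsClosable.coe_graph_closure {A : E →ₗ.[𝕜] F} (hA : A.IsClosable) :
    (A.closure.graph : Set (E × F)) = _root_.closure A.graph := by
  rw [← hA.graph_closure_eq_closure_graph, Submodule.topologicalClosure_coe]

theorem mapsTo_prodMap_graph_iff {A : E →ₗ.[𝕜] F} {U : E → E} {V : F → F} :
    Set.MapsTo (Prod.map U V) A.graph A.graph ↔
      ∀ x : A.domain, ∃ h : U x ∈ A.domain, A ⟨U x, h⟩ = V (A x) := by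
  constructor
  · intro h x
    obtain ⟨⟨y, hy⟩, hxy⟩ := (mem_graph_iff' A).mp (h (A.mem_graph x))
    obtain ⟨rfl, hAy⟩ := Prod.mk.inj hxy
    exact ⟨hy, hAy⟩
  · rintro h _ hp
    obtain ⟨x, rfl⟩ := (mem_graph_iff' A).mp hp
    obtain ⟨hx, hAx⟩ := h x
    exact (mem_graph_iff A).mpr ⟨⟨U x, hx⟩, rfl, hAx⟩

theorem IsClosable.closure_apply_map {A : E →ₗ.[𝕜] F} (hA : A.IsClosable) {U : E → E}
    {V : F → F} (hU : Continuous U) (hV : Continuous V)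
    (h : ∀ x : A.domain, ∃ h : U x ∈ A.domain, A ⟨U x, h⟩ = V (A x)) :
    ∀ x : A.closure.domain, ∃ h : U x ∈ A.closure.domain,
      A.closure ⟨U x, h⟩ = V (A.closure x) := by
  rw [← mapsTo_prodMap_graph_iff] at h ⊢
  rw [hA.coe_graph_closure]
  exact h.closure (hU.prodMap hV)

end Normed

section Inner

variable {𝕜 E : Type*} [RCLike 𝕜] [NormedAddCommGroup E] [InnerProductSpace 𝕜 E]

theorem IsClosable.isFormalAdjoint_closure {A : E →ₗ.[𝕜] E} (hA : A.IsClosable)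
    (hsymm : A.IsFormalAdjoint A) : A.closure.IsFormalAdjoint A.closure := by
  let Φ : (E × E) × (E × E) → 𝕜 := fun pq => ⟪pq.1.2, pq.2.1⟫_𝕜
  let Ψ : (E × E) × (E × E) → 𝕜 := fun pq => ⟪pq.1.1, pq.2.2⟫_𝕜
  have hgraph : Set.EqOn Φ Ψ (A.graph ×ˢ A.graph) := by
    rintro ⟨p, q⟩ ⟨hp, hq⟩
    obtain ⟨x, rfl⟩ := (mem_graph_iff' A).mp hp
    obtain ⟨y, rfl⟩ := (mem_graph_iff' A).mp hq
    exact hsymm x y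
  have hclosure := hgraph.closure (by fun_prop) (by fun_prop)
  rw [closure_prod_eq, ← hA.coe_graph_closure] at hclosure
  exact fun x y => hclosure (x := ((x, A.closure x), (y, A.closure y)))
    ⟨A.closure.mem_graph x, A.closure.mem_graph y⟩

def shift (A : E →ₗ.[𝕜] E) (c : 𝕜) : A.domain →ₗ[𝕜] E :=
  ((c • LinearMap.id : E →ₗ[𝕜] E) +ᵥ A).toFun

@[simp]
theorem shift_apply (A : E →ₗ.[𝕜] E) (c : 𝕜) (x : A.domain) :
    A.shift c x = c • (x : E) + A x :=
  rfl

variable {A : E →ₗ.[𝕜] E} {c : 𝕜}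

theorem IsFormalAdjoint.norm_shift_sq (hsymm : A.IsFormalAdjoint A) (hc : RCLike.re c = 0)
    (x : A.domain) : ‖A.shift c x‖ ^ 2 = ‖c‖ ^ 2 * ‖(x : E)‖ ^ 2 + ‖A x‖ ^ 2 := by
  have hreal : RCLike.im ⟪(x : E), A x⟫_𝕜 = 0 := by
    rw [← RCLike.conj_eq_iff_im, inner_conj_symm]
    exact hsymm x x
  rw [shift_apply, norm_add_sq (𝕜 := 𝕜), inner_smul_left, norm_smul, mul_pow]
  simp [hc, hreal]

theorem IsFormalAdjoint.norm_shift_neg (hsymm : A.IsFormalAdjoint A) (hc : RCLike.re c = 0)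
    (x : A.domain) : ‖A.shift (-c) x‖ = ‖A.shift c x‖ := by
  rw [← sq_eq_sq₀ (norm_nonneg _) (norm_nonneg _), hsymm.norm_shift_sq (by simp [hc]),
    hsymm.norm_shift_sq hc, norm_neg]

theorem IsFormalAdjoint.mul_norm_le_norm_shift (hsymm : A.IsFormalAdjoint A)
    (hc : RCLike.re c = 0) (x : A.domain) : ‖c‖ * ‖(x : E)‖ ≤ ‖A.shift c x‖ := by
  rw [← pow_le_pow_iff_left₀ (by positivity) (norm_nonneg _) two_ne_zero,
    hsymm.norm_shift_sq hc, mul_pow]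
  exact le_add_of_nonneg_right (by positivity)

theorem IsClosed.isClosed_range_shift [CompleteSpace E] (hA : A.IsClosed)
    (hsymm : A.IsFormalAdjoint A) (hc : RCLike.re c = 0) (hc0 : c ≠ 0) :
    _root_.IsClosed (range (A.shift c) : Set E) := by
  refine (hA.vadd (c • ContinuousLinearMap.id 𝕜 E)).isClosed_range (K := ‖c‖₊⁻¹) fun x => ?_
  rw [NNReal.coe_inv, coe_nnnorm, le_inv_mul_iff₀ (norm_pos_iff.mpr hc0)]
  exact hsymm.mul_norm_le_norm_shift hc x

theorem eq_zero_of_mem_orthogonal_range_shift (hdense : Dense (A.domain : Set E)) {c d : 𝕜}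
    (hcd : c ≠ d) {y : E} (hc : y ∈ (range (A.shift c))ᗮ) (hd : y ∈ (range (A.shift d))ᗮ) :
    y = 0 := by
  refine hdense.eq_zero_of_inner_right 𝕜 fun x hx => ?_
  have hdiff : A.shift c ⟨x, hx⟩ - A.shift d ⟨x, hx⟩ = (c - d) • x := by
    simp only [shift_apply, sub_smul]
    abel
  have h0 : ⟪(c - d) • x, y⟫_𝕜 = 0 := by
    rw [← hdiff, inner_sub_left, Submodule.inner_right_of_mem_orthogonal (mem_range_self _ _) hc,
      Submodule.inner_right_of_mem_orthogonal (mem_range_self _ _) hd, sub_zero]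
  rwa [inner_smul_left, mul_eq_zero, map_eq_zero, sub_eq_zero, or_iff_right hcd] at h0

theorem isSelfAdjoint_of_range_shift_eq_top [CompleteSpace E] (hdense : Dense (A.domain : Set E))
    (hsymm : A.IsFormalAdjoint A) (c : 𝕜) (htop : range (A.shift c) = ⊤)
    (htop' : range (A.shift (conj c)) = ⊤) : IsSelfAdjoint A := by
  have hle : A ≤ A† := hsymm.le_adjoint hdense
  refine (eq_of_le_of_domain_eq hle (le_antisymm hle.1 fun a ha => ?_)).symm
  obtain ⟨x, hx⟩ : conj c • a + A† ⟨a, ha⟩ ∈ range (A.shift (conj c)) := htop' ▸ trivial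
  have horth : a - x ∈ (range (A.shift c))ᗮ := by
    rw [Submodule.mem_orthogonal]
    rintro _ ⟨z, rfl⟩
    have hz := congrArg (⟪(z : E), ·⟫_𝕜) hx
    simp only [shift_apply, inner_add_right, inner_smul_right] at hz
    rw [inner_sub_right, shift_apply, inner_add_left, inner_add_left, inner_smul_left,
      inner_smul_left, hsymm z x, (A.adjoint_isFormalAdjoint hdense).symm z ⟨a, ha⟩]
    linear_combination -hz
  rw [htop, Submodule.top_orthogonal_eq_bot, Submodule.mem_bot, sub_eq_zero] at horth
  exact horth ▸ x.2

end Inner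

theorem isSelfAdjoint_of_commutant_abelian {E : Type*} [NormedAddCommGroup E]
    [InnerProductSpace ℂ E] [CompleteSpace E] (G : Subgroup (E ≃ₗᵢ[ℂ] E)) {A : E →ₗ.[ℂ] E}
    (hdense : Dense (A.domain : Set E)) (hA : A.IsClosed) (hsymm : A.IsFormalAdjoint A)
    (hcomm : ∀ U ∈ G, ∀ x : A.domain, ∃ h : U x ∈ A.domain, A ⟨U x, h⟩ = U (A x))
    (habelian : ∀ T S : E →L[ℂ] E,
      (∀ U ∈ G, ∀ x : E, T (U x) = U (T x)) →
      (∀ U ∈ G, ∀ x : E, S (U x) = U (S x)) →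
      ∀ x : E, T (S x) = S (T x)) :
    IsSelfAdjoint A := by
  have hI : RCLike.re Complex.I = 0 := by simp
  have := (hA.isClosed_range_shift hsymm hI Complex.I_ne_zero).completeSpace_coe
  have := (hA.isClosed_range_shift hsymm (c := -Complex.I) (by simp)
    (neg_ne_zero.mpr Complex.I_ne_zero)).completeSpace_coe
  have hrange : range (A.shift Complex.I) = range (A.shift (-Complex.I)) := by
    refine range_eq_range_of_commutant_abelian G _ _ (fun x => (hsymm.norm_shift_neg hI x).symm)
      (fun U hU x => ?_) habelian
    obtain ⟨hx, hAx⟩ := hcomm U hU x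
    exact ⟨⟨U x, hx⟩, by simp [hAx], by simp [hAx]⟩
  have htop : range (A.shift Complex.I) = ⊤ := by
    rw [← Submodule.orthogonal_eq_bot_iff, Submodule.eq_bot_iff]
    exact fun y hy => eq_zero_of_mem_orthogonal_range_shift hdense
      (by norm_num [Complex.ext_iff]) hy (hrange ▸ hy)
  exact isSelfAdjoint_of_range_shift_eq_top hdense hsymm Complex.I htop
    (by rwa [Complex.conj_I, ← hrange])

end LinearPMap

/-- Let `L` be a complex Hilbert space and `G` a group of unitary
operators on `L` (a subgroup of the group of unitary operators, here realized as the
ℂ-linear isometric automorphisms of `L`).  Let `(M, D)` be a densely defined symmetric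
linear operator commuting with `G`.  If the von Neumann algebra of bounded operators
commuting with every element of `G` is commutative, then `(M, D)` is essentially
self-adjoint: it is closable and its closure is self-adjoint. -/
theorem essentially_selfadjoint_of_commutant_abelian
    {L : Type*} [NormedAddCommGroup L] [InnerProductSpace ℂ L] [CompleteSpace L]
    (G : Subgroup (L ≃ₗᵢ[ℂ] L))
    (M : L →ₗ.[ℂ] L)
    (hdense : Dense (M.domain : Set L))
    (hsymm : ∀ φ ψ : M.domain,
      @inner ℂ _ _ (φ : L) (M ψ) = @inner ℂ _ _ (M φ) (ψ : L))
    (hcomm : ∀ U ∈ G, ∀ φ : M.domain,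
      ∃ h : U (φ : L) ∈ M.domain, M ⟨U (φ : L), h⟩ = U (M φ))
    (habelian : ∀ T S : L →L[ℂ] L,
      (∀ U ∈ G, ∀ x : L, T (U x) = U (T x)) →
      (∀ U ∈ G, ∀ x : L, S (U x) = U (S x)) →
      ∀ x : L, T (S x) = S (T x)) :
    M.IsClosable ∧ IsSelfAdjoint M.closure := by
  have hsymm' : M.IsFormalAdjoint M := fun φ ψ => (hsymm φ ψ).symm
  have hcl : M.IsClosable :=
    (M.adjoint_isClosed hdense).isClosable.leIsClosable (hsymm'.le_adjoint hdense)
  exact ⟨hcl, LinearPMap.isSelfAdjoint_of_commutant_abelian G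
    (hdense.mono (SetLike.coe_subset_coe.mpr M.le_closure.1)) hcl.closure_isClosed
    (hcl.isFormalAdjoint_closure hsymm')
    (fun U hU => hcl.closure_apply_map U.continuous U.continuous (hcomm U hU)) habelian⟩
end

section
/- Let p be a prime number and let χ : ℤ_p^× → ℂ^× be a continuous group homomorphism which is nontrivial. Let f ≥ 1 be the conductor exponent of χ, i.e. the smallest integer n ≥ 1 such that χ(u) = 1 for all u ∈ 1 + pⁿℤ_p. Let μ be the Haar measure on the compact group ℤ_p^× normalized so that μ(ℤ_p^×) = log p. Then ∫_{ℤ_p^×} (1 − χ(t))/|1 − t|_p dμ(t) = f · log p. (Equivalently, with the additive Haar measure λ on ℚ_p normalized by λ(ℤ_p) = 1, one has ∫_{ℤ_p^×} (1 − χ(t))/|1 − t|_p dλ(t) = f·(1 − 1/p).) -/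
/-!
Filter `ℤ_p^×` by the subgroups `Uₖ = 1 + pᵏℤ_p`. If `t ∈ Uᵥ \ Uᵥ₊₁` then
`|1 - t|_p⁻¹ = pᵛ = ∑_{k ≤ v} φ(pᵏ)`, so the integrand equals
`∑_{k < f} φ(pᵏ) 1_{Uₖ}(t) (1 - χ t)` (both sides vanish on `U_f`, where `χ = 1`).
As `[ℤ_p^× : Uₖ] = φ(pᵏ)`, invariance of `μ` gives `φ(pᵏ) μ(Uₖ) = log p`, and for
`k < f` the character is nontrivial on `Uₖ`, so `∫_{Uₖ} χ = 0`. Hence each of the `f`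
summands contributes `log p`.
-/

open MeasureTheory
open scoped Nat

theorem Nat.sum_range_totient_prime_pow {p : ℕ} (hp : p.Prime) (v : ℕ) :
    ∑ k ∈ Finset.range (v + 1), φ (p ^ k) = p ^ v := by
  rw [← Nat.sum_totient (p ^ v), Nat.divisors_prime_pow hp, Finset.sum_map]
  rfl

theorem MeasureTheory.setIntegral_subgroup_monoidHom_eq_zero {G : Type*} [Group G]
    [MeasurableSpace G] [MeasurableMul G] (μ : Measure G) [μ.IsMulLeftInvariant]
    {H : Subgroup G} (hH : MeasurableSet (H : Set G)) (χ : G →* ℂˣ) {h : G} (hh : h ∈ H)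
    (hχh : χ h ≠ 1) : ∫ t in H, (χ t : ℂ) ∂μ = 0 := by
  have hshift : ∀ t, (H : Set G).indicator (fun s ↦ (χ s : ℂ)) (h * t)
      = χ h * (H : Set G).indicator (fun s ↦ (χ s : ℂ)) t := by
    intro t
    by_cases ht : t ∈ H <;> simp [Set.indicator, ht, H.mul_mem_cancel_left hh]
  have key := integral_mul_left_eq_self (μ := μ) ((H : Set G).indicator fun s ↦ (χ s : ℂ)) h
  rw [← integral_indicator hH]
  by_contra hne
  rw [funext hshift, integral_const_mul, mul_eq_right₀ hne] at key
  exact hχh (Units.ext key)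

namespace PadicInt

variable {p : ℕ} [hp : Fact p.Prime]

variable (p) in
/-- The subgroup `1 + pⁿℤ_p` of `ℤ_p^×`. -/
noncomputable def unitsLevel (n : ℕ) : Subgroup ℤ_[p]ˣ :=
  (Units.map (toZModPow (p := p) n).toMonoidHom).ker

theorem mem_unitsLevel {n : ℕ} {u : ℤ_[p]ˣ} :
    u ∈ unitsLevel p n ↔ ‖(u : ℤ_[p]) - 1‖ ≤ (p : ℝ) ^ (-(n : ℤ)) := by
  rw [unitsLevel, MonoidHom.mem_ker, norm_le_pow_iff_mem_span_pow, ← ker_toZModPow,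
    RingHom.mem_ker, map_sub, map_one, sub_eq_zero, Units.ext_iff]
  rfl

theorem unitsLevel_zero : unitsLevel p 0 = ⊤ :=
  Subgroup.eq_top_iff' _ |>.mpr fun u ↦ by simpa [mem_unitsLevel] using norm_le_one _

theorem isClosed_unitsLevel (n : ℕ) : IsClosed (unitsLevel p n : Set ℤ_[p]ˣ) := by
  simp only [← SetLike.setOfPred_mem_eq, mem_unitsLevel]
  exact isClosed_le (Units.continuous_val.sub continuous_const).norm continuous_const

theorem units_map_toZModPow_surjective (n : ℕ) :
    Function.Surjective (Units.map (toZModPow (p := p) n).toMonoidHom) := by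
  rcases subsingleton_or_nontrivial (ZMod (p ^ n)) with h | h
  · exact fun x ↦ ⟨1, Subsingleton.elim _ _⟩
  · exact IsLocalRing.surjective_units_map_of_local_ringHom _ (ZMod.ringHom_surjective _)
      (IsLocalHom.of_surjective _ (ZMod.ringHom_surjective _))

theorem index_unitsLevel (n : ℕ) : (unitsLevel p n).index = φ (p ^ n) := by
  have : NeZero (p ^ n) := ⟨pow_ne_zero n hp.out.ne_zero⟩
  rw [unitsLevel, Subgroup.index_ker,
    MonoidHom.range_eq_top.mpr (units_map_toZModPow_surjective n), Subgroup.card_top,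
    Nat.card_eq_fintype_card, ZMod.card_units_eq_totient]

instance (n : ℕ) : (unitsLevel p n).FiniteIndex :=
  ⟨by rw [index_unitsLevel]; exact (Nat.totient_pos.mpr (pow_pos hp.out.pos n)).ne'⟩

theorem inv_norm_sub_one_eq_sum {m : ℕ} {u : ℤ_[p]ˣ} (hu : u ∉ unitsLevel p m) :
    ‖(u : ℤ_[p]) - 1‖⁻¹ = ∑ k ∈ Finset.range m,
      (unitsLevel p k : Set ℤ_[p]ˣ).indicator (fun _ ↦ (φ (p ^ k) : ℝ)) u := by
  classical
  have hu1 : (u : ℤ_[p]) - 1 ≠ 0 := fun h ↦ hu (by simp [mem_unitsLevel, h])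
  set v := ((u : ℤ_[p]) - 1).valuation
  have hmem : ∀ k, u ∈ unitsLevel p k ↔ k ≤ v := fun k ↦ by
    rw [mem_unitsLevel, norm_le_pow_iff_le_valuation _ hu1]
  have hvm : v < m := by
    by_contra h
    exact hu ((hmem m).mpr (by omega))
  have hfilter : {k ∈ Finset.range m | u ∈ unitsLevel p k} = Finset.range (v + 1) := by
    ext k
    simp only [Finset.mem_filter, Finset.mem_range, hmem]
    omega
  simp only [Set.indicator_apply, SetLike.mem_coe]
  rw [← Finset.sum_filter, hfilter, ← Nat.cast_sum, Nat.sum_range_totient_prime_pow hp.out,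
    norm_eq_zpow_neg_valuation hu1]
  simp [v]

theorem totient_mul_measureReal_unitsLevel [MeasurableSpace ℤ_[p]ˣ] [BorelSpace ℤ_[p]ˣ]
    (μ : Measure ℤ_[p]ˣ) [μ.IsMulLeftInvariant] [IsFiniteMeasure μ] (n : ℕ) :
    (φ (p ^ n) : ℝ) * μ.real (unitsLevel p n) = μ.real Set.univ := by
  rw [measureReal_def, measureReal_def, ← index_unitsLevel, ← ENNReal.toReal_natCast,
    ← ENNReal.toReal_mul, Subgroup.index_mul_measure _ (isClosed_unitsLevel n).measurableSet]

theorem div_norm_one_sub_eq_sum {χ : ℤ_[p]ˣ →* ℂˣ} {f : ℕ}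
    (hf : ∀ u ∈ unitsLevel p f, χ u = 1) (t : ℤ_[p]ˣ) :
    (1 - (χ t : ℂ)) / (‖(1 : ℤ_[p]) - t‖ : ℂ) = ∑ k ∈ Finset.range f,
      (unitsLevel p k : Set ℤ_[p]ˣ).indicator (fun s ↦ (φ (p ^ k) : ℂ) * (1 - χ s)) t := by
  by_cases ht : t ∈ unitsLevel p f
  · rw [hf t ht, Units.val_one, sub_self, zero_div, eq_comm]
    exact Finset.sum_eq_zero fun k _ ↦ by simp [hf t ht]
  · rw [div_eq_mul_inv, norm_sub_rev, ← Complex.ofReal_inv, inv_norm_sub_one_eq_sum ht,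
      Complex.ofReal_sum, Finset.mul_sum]
    refine Finset.sum_congr rfl fun k _ ↦ ?_
    by_cases hk : t ∈ unitsLevel p k <;> simp [Set.indicator, hk, mul_comm]

theorem exists_mem_unitsLevel_ne_one {χ : ℤ_[p]ˣ →* ℂˣ} (hχ : χ ≠ 1) {f k : ℕ}
    (hfmin : ∀ n, 1 ≤ n → (∀ u ∈ unitsLevel p n, χ u = 1) → f ≤ n) (hk : k < f) :
    ∃ h ∈ unitsLevel p k, χ h ≠ 1 := by
  by_contra! htriv
  rcases Nat.eq_zero_or_pos k with rfl | hk1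
  · exact hχ <| MonoidHom.ext fun u ↦ htriv u (unitsLevel_zero (p := p) ▸ Subgroup.mem_top u)
  · exact (hfmin k hk1 htriv).not_gt hk

end PadicInt

open PadicInt

theorem weil_conductor_formula_general (p : ℕ) [Fact p.Prime]
    [MeasurableSpace ℤ_[p]ˣ] [BorelSpace ℤ_[p]ˣ]
    (μ : Measure ℤ_[p]ˣ) [μ.IsHaarMeasure]
    (hμ : μ Set.univ = ENNReal.ofReal (Real.log p))
    (χ : ℤ_[p]ˣ →* ℂˣ) (hχcont : Continuous χ) (hχnontriv : χ ≠ 1)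
    (f : ℕ)
    (hf : ∀ u : ℤ_[p]ˣ, ‖(u : ℤ_[p]) - 1‖ ≤ (p : ℝ) ^ (-(f : ℤ)) → χ u = 1)
    (hfmin : ∀ n : ℕ, 1 ≤ n →
      (∀ u : ℤ_[p]ˣ, ‖(u : ℤ_[p]) - 1‖ ≤ (p : ℝ) ^ (-(n : ℤ)) → χ u = 1) → f ≤ n) :
    (∫ t : ℤ_[p]ˣ, ((1 : ℂ) - (χ t : ℂ)) / (‖(1 : ℤ_[p]) - (t : ℤ_[p])‖ : ℂ) ∂μ)
      = (f : ℂ) * (Real.log p : ℂ) := by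
  simp only [← mem_unitsLevel] at hf hfmin
  have hχint : Integrable (fun t ↦ (χ t : ℂ)) μ :=
    (Units.continuous_val.comp hχcont).integrable_of_hasCompactSupport (.of_compactSpace _)
  have hmeasure : ∀ k, (φ (p ^ k) : ℝ) * μ.real (unitsLevel p k) = Real.log p := fun k ↦ by
    rw [totient_mul_measureReal_unitsLevel, measureReal_def, hμ,
      ENNReal.toReal_ofReal (Real.log_nonneg (by exact_mod_cast (Fact.out : p.Prime).one_le))]
  have hlevel : ∀ k ∈ Finset.range f,
      ∫ t in unitsLevel p k, (1 - (χ t : ℂ)) ∂μ = μ.real (unitsLevel p k) := by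
    intro k hk
    obtain ⟨h, hh, hχh⟩ :=
      exists_mem_unitsLevel_ne_one hχnontriv hfmin (Finset.mem_range.mp hk)
    rw [integral_sub (integrable_const 1) hχint.integrableOn,
      setIntegral_subgroup_monoidHom_eq_zero μ (isClosed_unitsLevel k).measurableSet χ hh hχh,
      setIntegral_const, sub_zero, Complex.real_smul, mul_one]
  calc _ = ∫ t, ∑ k ∈ Finset.range f, (unitsLevel p k : Set ℤ_[p]ˣ).indicator
          (fun s ↦ (φ (p ^ k) : ℂ) * (1 - χ s)) t ∂μ :=
        integral_congr_ae (.of_forall (div_norm_one_sub_eq_sum hf))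
    _ = ∑ k ∈ Finset.range f,
          (φ (p ^ k) : ℂ) * ∫ t in unitsLevel p k, (1 - (χ t : ℂ)) ∂μ := by
        rw [integral_finsetSum]
        · refine Finset.sum_congr rfl fun k _ ↦ ?_
          rw [integral_indicator (isClosed_unitsLevel k).measurableSet, integral_const_mul]
        · exact fun k _ ↦ (((integrable_const 1).sub hχint).const_mul _).indicator
            (isClosed_unitsLevel k).measurableSet
    _ = ∑ k ∈ Finset.range f, ((φ (p ^ k) * μ.real (unitsLevel p k) : ℝ) : ℂ) :=
        Finset.sum_congr rfl fun k hk ↦ by rw [hlevel k hk]; push_cast; rfl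
    _ = f * Real.log p := by simp [hmeasure]

/-- Weil's conductor formula.  Let `p` be a prime and
`χ : ℤ_p^× → ℂ^×` a continuous nontrivial group homomorphism, with conductor
exponent `f` (the smallest `n ≥ 1` such that `χ` is trivial on `1 + pⁿℤ_p`, i.e. on
the units `u` with `‖u - 1‖ ≤ p^(-n)`).  If `μ` is the Haar measure on the compact
group `ℤ_p^×` normalized by `μ(ℤ_p^×) = log p`, then
`∫_{ℤ_p^×} (1 − χ(t)) / |1 − t|_p dμ(t) = f · log p`. -/
theorem weil_conductor_formula (p : ℕ) [Fact p.Prime]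
    [MeasurableSpace ℤ_[p]ˣ] [BorelSpace ℤ_[p]ˣ]
    (μ : Measure ℤ_[p]ˣ) [μ.IsHaarMeasure]
    (hμ : μ Set.univ = ENNReal.ofReal (Real.log p))
    (χ : ℤ_[p]ˣ →* ℂˣ) (hχcont : Continuous χ) (hχnontriv : χ ≠ 1)
    (f : ℕ) (hf1 : 1 ≤ f)
    (hf : ∀ u : ℤ_[p]ˣ, ‖(u : ℤ_[p]) - 1‖ ≤ (p : ℝ) ^ (-(f : ℤ)) → χ u = 1)
    (hfmin : ∀ n : ℕ, 1 ≤ n →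
      (∀ u : ℤ_[p]ˣ, ‖(u : ℤ_[p]) - 1‖ ≤ (p : ℝ) ^ (-(n : ℤ)) → χ u = 1) → f ≤ n) :
    (∫ t : ℤ_[p]ˣ, ((1 : ℂ) - (χ t : ℂ)) / (‖(1 : ℤ_[p]) - (t : ℤ_[p])‖ : ℂ) ∂μ)
      = (f : ℂ) * (Real.log p : ℂ) :=
  weil_conductor_formula_general p μ hμ χ hχcont hχnontriv f hf hfmin
end

section
/- Let p be a prime number, z ∈ ℂ^×, and g : (0,∞) → ℂ a smooth function with compact support contained in (0,∞). Let d*t denote the Haar measure on the locally compact group ℚ_p^× normalized so that the unit group ℤ_p^× has total mass log p. Then ∫_{t ∈ ℚ_p^×, |t|_p ≠ 1} g(1/|t|_p) · √(|t|_p) · z^{v_p(t)} / |1 − t|_p d*t = log p · Σ_{j=1}^{∞} p^{−j/2} ( z^{j} g(p^{j}) + z^{−j} g(p^{−j}) ), where both sides are finite (the sum has only finitely many nonzero terms since g has compact support in (0,∞)). -/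
open MeasureTheory

lemma aux_pow_support (g : ℝ → ℂ) (hgsupp : HasCompactSupport g)
    (hgpos : tsupport g ⊆ Set.Ioi 0) {P : ℝ} (hP : 1 < P) :
    ∃ N : ℕ, ∀ n : ℤ, (N : ℤ) < n.natAbs → g (P ^ n) = 0 := by
  rcases (tsupport g).eq_empty_or_nonempty with h | h
  · exact ⟨0, fun n _ => image_eq_zero_of_notMem_tsupport (by simp [h])⟩
  · have hK : IsCompact (tsupport g) := hgsupp
    have ha := hK.sInf_mem h
    have hb := hK.sSup_mem h
    have ha0 : 0 < sInf (tsupport g) := hgpos ha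
    obtain ⟨N₁, hN₁⟩ := pow_unbounded_of_one_lt (sSup (tsupport g)) hP
    obtain ⟨N₂, hN₂⟩ := pow_unbounded_of_one_lt (sInf (tsupport g))⁻¹ hP
    refine ⟨max N₁ N₂, fun n hn => image_eq_zero_of_notMem_tsupport fun hmem => ?_⟩
    have hle : sInf (tsupport g) ≤ P ^ n := csInf_le hK.bddBelow hmem
    have hge : P ^ n ≤ sSup (tsupport g) := le_csSup hK.bddAbove hmem
    rcases le_or_gt 0 n with h0 | h0
    · have h1 : (P : ℝ) ^ (N₁ : ℤ) ≤ P ^ n := by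
        apply zpow_le_zpow_right₀ hP.le
        omega
      rw [zpow_natCast] at h1
      linarith
    · have h1 : (P : ℝ) ^ (N₂ : ℤ) ≤ P ^ (-n) := by
        apply zpow_le_zpow_right₀ hP.le
        omega
      rw [zpow_natCast] at h1
      have h2 : (sInf (tsupport g))⁻¹ < P ^ (-n) := lt_of_lt_of_le hN₂ h1
      have h3 : P ^ n < sInf (tsupport g) := by
        have hpos : (0:ℝ) < P ^ n := zpow_pos (lt_trans one_pos hP) _
        rw [zpow_neg] at h2
        rwa [inv_lt_inv₀ ha0 hpos] at h2
      linarith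

/-- Let `p` be a prime, `z ∈ ℂ^×`, and `g` a smooth compactly
supported function on `(0, ∞)`.  With `d*t` the Haar measure on `ℚ_p^×` giving mass
`log p` to the unit group,
`∫_{|t|_p ≠ 1} g(1/|t|_p) √(|t|_p) z^(v_p(t)) / |1 − t|_p d*t
  = log p · Σ_{j ≥ 1} p^(−j/2) (z^j g(p^j) + z^(−j) g(p^(−j)))`,
both sides being finite (the integrand is integrable on that region and the sum has
only finitely many nonzero terms). -/
theorem padic_local_term_of_explicit_formula (p : ℕ) [Fact p.Prime]
    [MeasurableSpace ℚ_[p]ˣ] [BorelSpace ℚ_[p]ˣ]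
    (μ : Measure ℚ_[p]ˣ) [μ.IsHaarMeasure]
    (hμ : μ {t : ℚ_[p]ˣ | ‖(t : ℚ_[p])‖ = 1} = ENNReal.ofReal (Real.log p))
    (z : ℂ) (hz : z ≠ 0)
    (g : ℝ → ℂ) (hg : ContDiff ℝ (⊤ : ℕ∞) g) (hgsupp : HasCompactSupport g)
    (hgpos : tsupport g ⊆ Set.Ioi 0) :
    IntegrableOn (fun t : ℚ_[p]ˣ =>
        g (‖(t : ℚ_[p])‖⁻¹) * (Real.sqrt ‖(t : ℚ_[p])‖ : ℂ) * z ^ ((t : ℚ_[p]).valuation)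
          / (‖(1 : ℚ_[p]) - (t : ℚ_[p])‖ : ℂ))
      {t : ℚ_[p]ˣ | ‖(t : ℚ_[p])‖ ≠ 1} μ ∧
    {j : ℕ | (((p : ℝ) ^ (-((j : ℝ) + 1) / 2) : ℝ) : ℂ) *
        (z ^ ((j : ℤ) + 1) * g ((p : ℝ) ^ ((j : ℤ) + 1)) +
          z ^ (-((j : ℤ) + 1)) * g ((p : ℝ) ^ (-((j : ℤ) + 1)))) ≠ 0}.Finite ∧
    (∫ t in {t : ℚ_[p]ˣ | ‖(t : ℚ_[p])‖ ≠ 1},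
        g (‖(t : ℚ_[p])‖⁻¹) * (Real.sqrt ‖(t : ℚ_[p])‖ : ℂ) * z ^ ((t : ℚ_[p]).valuation)
          / (‖(1 : ℚ_[p]) - (t : ℚ_[p])‖ : ℂ) ∂μ)
      = (Real.log p : ℂ) *
        ∑' j : ℕ, (((p : ℝ) ^ (-((j : ℝ) + 1) / 2) : ℝ) : ℂ) *
          (z ^ ((j : ℤ) + 1) * g ((p : ℝ) ^ ((j : ℤ) + 1)) +
            z ^ (-((j : ℤ) + 1)) * g ((p : ℝ) ^ (-((j : ℤ) + 1)))) := by
  have hprime : p.Prime := Fact.out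
  have hp : (1 : ℝ) < (p : ℝ) := by exact_mod_cast hprime.one_lt
  set P : ℝ := (p : ℝ) with hPdef
  have hP0 : (0 : ℝ) < P := lt_trans one_pos hp
  have hP1 : P ≠ 1 := ne_of_gt hp
  have hpQ : (p : ℚ_[p]) ≠ 0 := Nat.cast_ne_zero.mpr hprime.ne_zero
  -- the integrand
  set f : ℚ_[p]ˣ → ℂ := fun t =>
    g (‖(t : ℚ_[p])‖⁻¹) * (Real.sqrt ‖(t : ℚ_[p])‖ : ℂ) * z ^ ((t : ℚ_[p]).valuation)
      / (‖(1 : ℚ_[p]) - (t : ℚ_[p])‖ : ℂ) with hfdef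
  set W : Set ℚ_[p]ˣ := {t : ℚ_[p]ˣ | ‖(t : ℚ_[p])‖ ≠ 1} with hWdef
  have hval : ∀ t : ℚ_[p]ˣ, ‖(t : ℚ_[p])‖ = P ^ (-(t : ℚ_[p]).valuation) := fun t =>
    Padic.norm_eq_zpow_neg_valuation t.ne_zero
  -- shells
  set S : ℤ → Set ℚ_[p]ˣ := fun n => {t : ℚ_[p]ˣ | ‖(t : ℚ_[p])‖ = P ^ (-n)} with hSdef
  have hmemS : ∀ (t : ℚ_[p]ˣ) (n : ℤ), t ∈ S n ↔ (t : ℚ_[p]).valuation = n := by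
    intro t n
    simp only [hSdef, Set.mem_setOf_eq, hval t]
    rw [zpow_right_inj₀ hP0 hP1, neg_inj]
  have hcont : Continuous fun t : ℚ_[p]ˣ => ‖(t : ℚ_[p])‖ :=
    continuous_norm.comp Units.continuous_val
  have hSmeas : ∀ n : ℤ, MeasurableSet (S n) := fun n =>
    hcont.measurable (measurableSet_singleton (P ^ (-n)))
  have hWmeas : MeasurableSet W :=
    hcont.measurable (measurableSet_singleton (1 : ℝ)) |>.compl
  -- measure of the shells
  have hSμ : ∀ n : ℤ, μ (S n) = ENNReal.ofReal (Real.log p) := by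
    intro n
    set π : ℚ_[p]ˣ := Units.mk0 (p : ℚ_[p]) hpQ with hπdef
    have hπ : ‖((π ^ n : ℚ_[p]ˣ) : ℚ_[p])‖ = P ^ (-n) := by
      rw [Units.val_zpow_eq_zpow_val, norm_zpow]
      simp only [hπdef, Units.val_mk0, Padic.norm_p]
      rw [inv_zpow, ← zpow_neg]
    have key : ((π ^ n : ℚ_[p]ˣ) * ·) ⁻¹' (S n) = {t : ℚ_[p]ˣ | ‖(t : ℚ_[p])‖ = 1} := by
      ext t
      simp only [hSdef, Set.mem_preimage, Set.mem_setOf_eq, Units.val_mul, norm_mul, hπ]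
      constructor
      · intro h
        have := mul_left_cancel₀ (a := P ^ (-n)) (by positivity) (h.trans (mul_one _).symm)
        exact this
      · intro h; rw [h, mul_one]
    calc μ (S n) = μ (((π ^ n : ℚ_[p]ˣ) * ·) ⁻¹' (S n)) :=
          (measure_preimage_mul μ (π ^ n) (S n)).symm
      _ = ENNReal.ofReal (Real.log p) := by rw [key]; exact hμ
  -- value of the integrand on the shells
  set F : ℤ → ℂ := fun n =>
    g (P ^ n) * ((Real.sqrt (P ^ (-n)) : ℝ) : ℂ) * z ^ n / ((max 1 (P ^ (-n)) : ℝ) : ℂ)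
      with hFdef
  have honshell : ∀ (t : ℚ_[p]ˣ) (n : ℤ), n ≠ 0 → t ∈ S n → f t = F n := by
    intro t n hn ht
    have hv : (t : ℚ_[p]).valuation = n := (hmemS t n).mp ht
    have hnorm : ‖(t : ℚ_[p])‖ = P ^ (-n) := ht
    have hnorm1 : ‖(t : ℚ_[p])‖ ≠ 1 := by
      rw [hnorm]
      intro hcon
      rw [← zpow_zero P, zpow_right_inj₀ hP0 hP1] at hcon
      omega
    have hsub : ‖(1 : ℚ_[p]) - (t : ℚ_[p])‖ = max 1 (P ^ (-n)) := by
      rw [sub_eq_add_neg, Padic.add_eq_max_of_ne (by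
        rw [norm_one, norm_neg]; exact fun hcon => hnorm1 hcon.symm), norm_one, norm_neg, hnorm]
    rw [hfdef]
    simp only [hnorm, hsub, hv, ← zpow_neg, neg_neg, hFdef]
  -- support bound
  obtain ⟨N, hN⟩ := aux_pow_support g hgsupp hgpos hp
  -- the index finset
  set D : Finset ℤ := ((Finset.range N).image fun j : ℕ => (j : ℤ) + 1) ∪
      ((Finset.range N).image fun j : ℕ => -((j : ℤ) + 1)) with hDdef
  have hDmem : ∀ n : ℤ, n ∈ D ↔ n ≠ 0 ∧ n.natAbs ≤ N := by
    intro n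
    simp only [hDdef, Finset.mem_union, Finset.mem_image, Finset.mem_range]
    constructor
    · rintro (⟨j, hj, rfl⟩ | ⟨j, hj, rfl⟩) <;> constructor <;> omega
    · rintro ⟨h0, hle⟩
      rcases lt_or_gt_of_ne h0 with h | h
      · exact Or.inr ⟨(-n - 1).toNat, by omega, by omega⟩
      · exact Or.inl ⟨(n - 1).toNat, by omega, by omega⟩
  -- pointwise identity
  have hfeq : Set.indicator W f =
      fun t => ∑ n ∈ D, Set.indicator (S n) (fun _ => F n) t := by
    funext t
    have hsum : ∑ n ∈ D, Set.indicator (S n) (fun _ => F n) t =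
        if (t : ℚ_[p]).valuation ∈ D then F ((t : ℚ_[p]).valuation) else 0 := by
      rw [← Finset.sum_ite_eq' D ((t : ℚ_[p]).valuation) (fun n => F n)]
      refine Finset.sum_congr rfl fun n _ => ?_
      rw [Set.indicator_apply]
      congr 1
      rw [hmemS t n]
      exact propext ⟨fun h => h.symm, fun h => h.symm⟩
    rw [hsum]
    by_cases h1 : ‖(t : ℚ_[p])‖ = 1
    · have hv0 : (t : ℚ_[p]).valuation = 0 := by
        have := hval t
        rw [h1, ← zpow_zero P] at this
        have := (zpow_right_inj₀ hP0 hP1).mp this.symm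
        omega
      rw [Set.indicator_of_notMem (by simp [hWdef, h1]), if_neg]
      rw [hDmem, hv0]
      simp
    · have hv0 : (t : ℚ_[p]).valuation ≠ 0 := by
        intro hcon
        apply h1
        rw [hval t, hcon, neg_zero, zpow_zero]
      have htS : t ∈ S ((t : ℚ_[p]).valuation) := (hmemS t _).mpr rfl
      rw [Set.indicator_of_mem (by exact h1) f,
        honshell t _ hv0 htS]
      by_cases hvD : (t : ℚ_[p]).valuation ∈ D
      · rw [if_pos hvD]
      · rw [if_neg hvD]
        have hbig : (N : ℤ) < ((t : ℚ_[p]).valuation).natAbs := by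
          by_contra hcon
          exact hvD ((hDmem _).mpr ⟨hv0, by omega⟩)
        rw [hFdef]
        simp [hN _ hbig]
  -- integrability
  have hSfin : ∀ n : ℤ, μ (S n) < ⊤ := fun n => by
    rw [hSμ n]; exact ENNReal.ofReal_lt_top
  have hInt : ∀ n ∈ D, Integrable (Set.indicator (S n) fun _ => F n) μ := by
    intro n _
    rw [integrable_indicator_iff (hSmeas n)]
    exact integrableOn_const (hSfin n).ne
  have hIsum : Integrable (fun t => ∑ n ∈ D, Set.indicator (S n) (fun _ => F n) t) μ :=
    integrable_finset_sum D hInt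
  have hIW : IntegrableOn f W μ := by
    rw [← integrable_indicator_iff hWmeas, hfeq]
    exact hIsum
  -- vanishing of the series terms for large j
  have hTzero : ∀ j : ℕ, N ≤ j →
      ((P ^ (-((j : ℝ) + 1) / 2) : ℝ) : ℂ) *
        (z ^ ((j : ℤ) + 1) * g (P ^ ((j : ℤ) + 1)) +
          z ^ (-((j : ℤ) + 1)) * g (P ^ (-((j : ℤ) + 1)))) = 0 := by
    intro j hj
    rw [hN ((j : ℤ) + 1) (by omega), hN (-((j : ℤ) + 1)) (by omega)]
    simp
  -- the rpow computations
  have hzc : ∀ j : ℕ, (P : ℝ) ^ ((j : ℤ) + 1) = P ^ (((j : ℝ) + 1) : ℝ) := by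
    intro j
    rw [← Real.rpow_intCast P ((j : ℤ) + 1)]
    congr 1
    push_cast
    ring
  have hzc' : ∀ j : ℕ, (P : ℝ) ^ (-((j : ℤ) + 1)) = P ^ ((-((j : ℝ) + 1)) : ℝ) := by
    intro j
    rw [← Real.rpow_intCast P (-((j : ℤ) + 1))]
    congr 1
    push_cast
    ring
  have e1 : ∀ j : ℕ, Real.sqrt (P ^ (-((j : ℤ) + 1))) = P ^ (-((j : ℝ) + 1) / 2) := by
    intro j
    rw [hzc' j, Real.sqrt_eq_rpow, ← Real.rpow_mul hP0.le]
    congr 1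
    ring
  have e2 : ∀ j : ℕ, Real.sqrt (P ^ (((j : ℤ) + 1))) / P ^ ((j : ℤ) + 1)
      = P ^ (-((j : ℝ) + 1) / 2) := by
    intro j
    rw [hzc j, Real.sqrt_eq_rpow, ← Real.rpow_mul hP0.le, ← Real.rpow_sub hP0]
    congr 1
    ring
  have hmax1 : ∀ j : ℕ, max 1 (P ^ (-((j : ℤ) + 1))) = 1 := by
    intro j
    refine max_eq_left ?_
    calc P ^ (-((j : ℤ) + 1)) ≤ P ^ (0 : ℤ) := zpow_le_zpow_right₀ hp.le (by omega)
      _ = 1 := zpow_zero P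
  have hmax2 : ∀ j : ℕ, max 1 (P ^ (((j : ℤ) + 1))) = P ^ ((j : ℤ) + 1) := by
    intro j
    refine max_eq_right ?_
    calc (1 : ℝ) = P ^ (0 : ℤ) := (zpow_zero P).symm
      _ ≤ P ^ ((j : ℤ) + 1) := zpow_le_zpow_right₀ hp.le (by omega)
  have hF1 : ∀ j : ℕ, F ((j : ℤ) + 1) =
      ((P ^ (-((j : ℝ) + 1) / 2) : ℝ) : ℂ) * (z ^ ((j : ℤ) + 1) * g (P ^ ((j : ℤ) + 1))) := by
    intro j
    simp only [hFdef]
    rw [hmax1 j, e1 j, Complex.ofReal_one, div_one]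
    ring
  have hF2 : ∀ j : ℕ, F (-((j : ℤ) + 1)) =
      ((P ^ (-((j : ℝ) + 1) / 2) : ℝ) : ℂ) *
        (z ^ (-((j : ℤ) + 1)) * g (P ^ (-((j : ℤ) + 1)))) := by
    intro j
    simp only [hFdef, neg_neg]
    rw [hmax2 j, ← e2 j, Complex.ofReal_div]
    ring
  refine ⟨hIW, ?_, ?_⟩
  · refine Set.Finite.subset (Finset.range N).finite_toSet fun j hj => ?_
    rw [Set.mem_setOf_eq] at hj
    by_contra hc
    simp only [Finset.coe_range, Set.mem_Iio, not_lt] at hc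
    exact hj (hTzero j hc)
  · have htsum : (∑' j : ℕ, ((P ^ (-((j : ℝ) + 1) / 2) : ℝ) : ℂ) *
        (z ^ ((j : ℤ) + 1) * g (P ^ ((j : ℤ) + 1)) +
          z ^ (-((j : ℤ) + 1)) * g (P ^ (-((j : ℤ) + 1)))))
        = ∑ j ∈ Finset.range N, ((P ^ (-((j : ℝ) + 1) / 2) : ℝ) : ℂ) *
        (z ^ ((j : ℤ) + 1) * g (P ^ ((j : ℤ) + 1)) +
          z ^ (-((j : ℤ) + 1)) * g (P ^ (-((j : ℤ) + 1)))) :=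
      tsum_eq_sum fun j hj => hTzero j (by simpa using hj)
    have hdisj : Disjoint ((Finset.range N).image fun j : ℕ => (j : ℤ) + 1)
        ((Finset.range N).image fun j : ℕ => -((j : ℤ) + 1)) := by
      rw [Finset.disjoint_left]
      intro a ha hb
      simp only [Finset.mem_image, Finset.mem_range] at ha hb
      obtain ⟨x, _, rfl⟩ := ha
      obtain ⟨y, _, hy⟩ := hb
      omega
    have hsumD : ∑ n ∈ D, F n = ∑ j ∈ Finset.range N, (F ((j : ℤ) + 1) + F (-((j : ℤ) + 1))) := by
      rw [hDdef, Finset.sum_union hdisj,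
        Finset.sum_image (fun x _ y _ h => by omega),
        Finset.sum_image (fun x _ y _ h => by omega), ← Finset.sum_add_distrib]
    calc (∫ t in W, f t ∂μ) = ∫ t, Set.indicator W f t ∂μ := (integral_indicator hWmeas).symm
      _ = ∑ n ∈ D, ∫ t, Set.indicator (S n) (fun _ => F n) t ∂μ := by
          rw [hfeq]; exact integral_finset_sum D hInt
      _ = ∑ n ∈ D, (Real.log p : ℂ) * F n := by
          refine Finset.sum_congr rfl fun n _ => ?_
          rw [integral_indicator_const (F n) (hSmeas n), measureReal_def, hSμ n,
            ENNReal.toReal_ofReal (Real.log_nonneg hp.le), Complex.real_smul]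
      _ = (Real.log p : ℂ) * ∑ n ∈ D, F n := by rw [Finset.mul_sum]
      _ = _ := by
          rw [htsum, hsumD, Finset.mul_sum, Finset.mul_sum]
          refine Finset.sum_congr rfl fun j _ => ?_
          rw [hF1 j, hF2 j]
          ring
end

section
/- Let q > 1 be a real number, g : (0,∞) → ℂ a smooth function with compact support contained in (0,∞), and ĝ(s) = ∫₀^∞ g(u) u^{s−1} du its Mellin transform. Then for every τ ∈ ℝ, both of the following series converge absolutely and (1/log q) · Σ_{j ∈ ℤ} ĝ( i·(τ + 2πj/log q) ) = Σ_{k ∈ ℤ} g(q^k) · q^{i k τ} (the right-hand sum having only finitely many nonzero terms). -/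
open MeasureTheory Complex Real

open Set Filter Asymptotics
open scoped FourierTransform

lemma cpow_exp_aux (u : ℝ) (s : ℂ) : (↑(Real.exp u) : ℂ) ^ s = Complex.exp (s * u) := by
  rw [Complex.cpow_def_of_ne_zero (by exact_mod_cast (Real.exp_pos u).ne'),
    ← Complex.ofReal_log (Real.exp_pos u).le, Real.log_exp, mul_comm]

lemma mellin_cov (L : ℝ) (hL : 0 < L) (g : ℝ → ℂ) (w : ℂ) :
    mellin g (Complex.I * w)
      = L * ∫ t : ℝ, Complex.exp (Complex.I * w * L * t) * g (Real.exp (L * t)) := by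
  have himg : (fun t : ℝ => Real.exp (L * t)) '' Set.univ = Set.Ioi 0 := by
    rw [Set.image_univ]
    have h1 : Set.range (fun t : ℝ => Real.exp (L * t)) = Real.exp '' Set.range (fun t : ℝ => L * t) := by
      rw [← Set.range_comp]; rfl
    rw [h1, (mul_left_surjective₀ hL.ne' : Function.Surjective (fun t : ℝ => L * t)).range_eq,
      Set.image_univ, Real.range_exp]
  have hderiv : ∀ x ∈ Set.univ, HasDerivWithinAt (fun t : ℝ => Real.exp (L * t))
      (L * Real.exp (L * x)) Set.univ x := by
    intro x _
    have h : HasDerivAt (fun t : ℝ => Real.exp (L * t)) (L * Real.exp (L * x)) x := by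
      simpa [mul_comm] using ((hasDerivAt_id x).const_mul L).exp
    exact h.hasDerivWithinAt
  have hinj : Set.InjOn (fun t : ℝ => Real.exp (L * t)) Set.univ := by
    intro a _ b _ h
    have := Real.exp_injective h
    exact mul_left_cancel₀ hL.ne' this
  rw [mellin, ← himg,
    integral_image_eq_integral_abs_deriv_smul MeasurableSet.univ hderiv hinj]
  rw [setIntegral_univ, ← integral_const_mul]
  congr 1
  ext t
  have hev : |L * Real.exp (L * t)| = L * Real.exp (L * t) := by
    rw [abs_of_pos (mul_pos hL (Real.exp_pos _))]
  rw [hev, Complex.real_smul, smul_eq_mul, cpow_exp_aux]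
  push_cast
  have h2 : cexp ((L : ℂ) * t) * cexp ((Complex.I * w - 1) * ((L : ℂ) * t))
      = cexp (Complex.I * w * L * t) := by
    rw [← Complex.exp_add]; congr 1; ring
  rw [mul_assoc]; congr 1; rw [← mul_assoc, h2]

set_option maxHeartbeats 2000000 in
/-- Poisson summation in logarithmic coordinates.  For `q > 1`,
`g` smooth with compact support in `(0, ∞)` with Mellin transform `ĝ`, and `τ ∈ ℝ`,
both series below converge absolutely and
`(1/log q) Σ_{j ∈ ℤ} ĝ(i(τ + 2πj/log q)) = Σ_{k ∈ ℤ} g(q^k) q^(ikτ)`,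
the right-hand sum having only finitely many nonzero terms. -/
theorem poisson_summation_mellin
    (q : ℝ) (hq : 1 < q)
    (g : ℝ → ℂ) (hg : ContDiff ℝ (⊤ : ℕ∞) g) (hgsupp : HasCompactSupport g)
    (hgpos : tsupport g ⊆ Set.Ioi 0) (τ : ℝ) :
    Summable (fun j : ℤ =>
      ‖mellin g (Complex.I * (τ + 2 * Real.pi * j / Real.log q))‖) ∧
    Summable (fun k : ℤ => ‖g (q ^ k) * (q : ℂ) ^ (Complex.I * k * τ)‖) ∧
    {k : ℤ | g (q ^ k) ≠ 0}.Finite ∧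
    (1 / (Real.log q : ℂ)) *
        ∑' j : ℤ, mellin g (Complex.I * (τ + 2 * Real.pi * j / Real.log q))
      = ∑' k : ℤ, g (q ^ k) * (q : ℂ) ^ (Complex.I * k * τ) := by
  set L := Real.log q with hLdef
  have hq0 : 0 < q := lt_trans one_pos hq
  have hL : 0 < L := Real.log_pos hq
  -- bounds on the support of g
  obtain ⟨a, b, ha, hab⟩ : ∃ a b : ℝ, 0 < a ∧ ∀ x : ℝ, g x ≠ 0 → x ∈ Set.Icc a b := by
    by_cases hK : tsupport g = ∅
    · exact ⟨1, 0, one_pos, fun x hx => absurd (subset_tsupport g hx)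
        (by simp [hK, Set.notMem_empty])⟩
    · have hKc : IsCompact (tsupport g) := hgsupp
      have hne : (tsupport g).Nonempty := Set.nonempty_iff_ne_empty.2 hK
      refine ⟨sInf (tsupport g), sSup (tsupport g),
        hgpos (hKc.sInf_mem hne), fun x hx => ?_⟩
      have hxK : x ∈ tsupport g := subset_tsupport g hx
      exact ⟨csInf_le hKc.bddBelow hxK, le_csSup hKc.bddAbove hxK⟩
  -- the function in logarithmic coordinates
  set f : ℝ → ℂ := fun x => Complex.exp (Complex.I * (τ * L) * x) * g (Real.exp (L * x))
    with hfdef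
  have hfsmooth : ContDiff ℝ (⊤ : ℕ∞) f := by
    apply ContDiff.mul
    · apply Complex.contDiff_exp.comp
      exact (contDiff_const.mul Complex.ofRealCLM.contDiff)
    · exact hg.comp (Real.contDiff_exp.comp (contDiff_const.mul contDiff_id))
  have hfsupp : HasCompactSupport f := by
    apply HasCompactSupport.of_support_subset_isCompact
      (isCompact_Icc (a := Real.log a / L) (b := Real.log b / L))
    intro x hx
    have hgx : g (Real.exp (L * x)) ≠ 0 := by
      intro h; apply hx; simp [hfdef, h]
    obtain ⟨h1, h2⟩ := hab _ hgx
    constructor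
    · rw [div_le_iff₀ hL, mul_comm]
      calc Real.log a ≤ Real.log (Real.exp (L * x)) := Real.log_le_log ha h1
        _ = L * x := Real.log_exp _
    · rw [le_div_iff₀ hL, mul_comm]
      calc L * x = Real.log (Real.exp (L * x)) := (Real.log_exp _).symm
        _ ≤ Real.log b := Real.log_le_log (Real.exp_pos _) h2
  -- decay of f
  have f_bd : f =O[cocompact ℝ] (fun x => |x| ^ (-2 : ℝ)) := by
    have h0 : f =ᶠ[cocompact ℝ] 0 := by
      filter_upwards [hfsupp.compl_mem_cocompact] with x hx
      exact image_eq_zero_of_notMem_tsupport hx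
    exact h0.trans_isBigO (isBigO_zero _ _)
  -- decay of 𝓕 f
  have Ff_bd : (𝓕 f) =O[cocompact ℝ] (fun x => |x| ^ (-2 : ℝ)) := by
    have hint : ∀ (k n : ℕ), (k : ℕ∞) ≤ (⊤ : ℕ∞) → (n : ℕ∞) ≤ (⊤ : ℕ∞) →
        Integrable (fun v : ℝ ↦ ‖v‖ ^ k * ‖iteratedFDeriv ℝ n f v‖) := by
      intro k n _ _
      apply Continuous.integrable_of_hasCompactSupport
      · exact (continuous_norm.pow k).mul
          (((hfsmooth.of_le le_rfl).continuous_iteratedFDeriv (by exact_mod_cast le_top)).norm)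
      · exact ((hfsupp.iteratedFDeriv n).norm).mul_left
    have key := fun w : ℝ => Real.pow_mul_norm_iteratedFDeriv_fourier_le
      (K := (⊤ : ℕ∞)) (N := (⊤ : ℕ∞)) (hfsmooth.of_le (by simp)) hint le_top le_top
      (k := 0) (n := 2) w
    obtain ⟨C, hC⟩ : ∃ C : ℝ, ∀ w : ℝ, |w| ^ 2 * ‖𝓕 f w‖ ≤ C := by
      refine ⟨(2 * π) ^ (0:ℕ) * (2 * (0:ℕ) + 2) ^ (2:ℕ) *
        ∑ p ∈ Finset.range 1 ×ˢ Finset.range 3,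
          ∫ v : ℝ, ‖v‖ ^ p.1 * ‖iteratedFDeriv ℝ p.2 f v‖, fun w => ?_⟩
      have h1 := key w
      rw [norm_iteratedFDeriv_zero, Real.norm_eq_abs] at h1
      convert h1 using 2
    rw [isBigO_iff]
    refine ⟨C, ?_⟩
    have hev : ∀ᶠ x : ℝ in cocompact ℝ, 1 ≤ |x| := by
      rw [cocompact_eq_atBot_atTop]
      constructor
      · filter_upwards [eventually_le_atBot (-1 : ℝ)] with x hx
        rw [_root_.abs_of_nonpos (by linarith)]; linarith
      · filter_upwards [eventually_ge_atTop (1 : ℝ)] with x hx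
        rw [_root_.abs_of_nonneg (by linarith)]; linarith
    filter_upwards [hev] with x hx
    have hx0 : (0:ℝ) < |x| ^ 2 := by positivity
    have h3 : ‖|x| ^ (-2 : ℝ)‖ = (|x| ^ 2)⁻¹ := by
      rw [Real.norm_eq_abs, _root_.abs_of_nonneg (Real.rpow_nonneg (abs_nonneg x) _),
        ← Real.rpow_natCast |x| 2, ← Real.rpow_neg (abs_nonneg x)]
      norm_num
    rw [h3]
    calc ‖𝓕 f x‖ = (|x| ^ 2 * ‖𝓕 f x‖) / |x| ^ 2 := (mul_div_cancel_left₀ _ hx0.ne').symm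
      _ ≤ C / |x| ^ 2 := (div_le_div_iff_of_pos_right hx0).mpr (hC x)
      _ = C * (|x| ^ 2)⁻¹ := div_eq_mul_inv _ _
  have Ff_sum : Summable fun n : ℤ => ‖𝓕 f n‖ := by
    apply summable_of_isBigO (Real.summable_abs_int_rpow one_lt_two)
    exact (Ff_bd.norm_left).comp_tendsto Int.tendsto_coe_cofinite
  -- Poisson summation
  have poisson : ∑' n : ℤ, f n = ∑' n : ℤ, 𝓕 f n := by
    have := Real.tsum_eq_tsum_fourier_of_rpow_decay
      hfsmooth.continuous one_lt_two f_bd Ff_bd 0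
    simpa [QuotientAddGroup.mk_zero, fourier_eval_zero, mul_one] using this
  -- identification of Fourier coefficients with Mellin values
  have hLne : (L : ℂ) ≠ 0 := by exact_mod_cast hL.ne'
  have hkey : ∀ j : ℤ, mellin g (Complex.I * (τ + 2 * Real.pi * j / L))
      = L * 𝓕 f (-j) := by
    intro j
    have hpt : ∀ t : ℝ,
        Complex.exp (Complex.I * ((τ : ℂ) + 2 * (π : ℂ) * (j : ℂ) / (L : ℂ)) * L * t)
          * g (Real.exp (L * t))
        = Complex.exp (((-2 * π * t * (-(j : ℝ)) : ℝ) : ℂ) * Complex.I) • f t := by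
      intro t
      simp only [hfdef, smul_eq_mul]
      rw [← mul_assoc, ← Complex.exp_add]
      congr 1
      push_cast
      field_simp
      ring
    rw [mellin_cov L hL g _, Real.fourier_real_eq_integral_exp_smul]
    congr 1
    simp only [hpt]
  -- identification of f at integers
  have hqk : ∀ k : ℤ, Real.exp (L * k) = q ^ k := by
    intro k
    rw [← Real.rpow_intCast q k, Real.rpow_def_of_pos hq0, mul_comm]
  have hfk : ∀ k : ℤ, f k = g (q ^ k) * (q : ℂ) ^ (Complex.I * k * τ) := by
    intro k
    simp only [hfdef]
    rw [hqk k, mul_comm (Complex.exp _)]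
    congr 1
    rw [Complex.cpow_def_of_ne_zero (by exact_mod_cast hq0.ne'),
      ← Complex.ofReal_log hq0.le]
    congr 1
    push_cast
    ring
  -- finiteness
  have hfin : {k : ℤ | g (q ^ k) ≠ 0}.Finite := by
    apply Set.Finite.subset (Set.finite_Icc ⌈Real.log a / L⌉ ⌊Real.log b / L⌋)
    intro k hk
    obtain ⟨h1, h2⟩ := hab _ hk
    rw [← hqk k] at h1 h2
    have hla : Real.log a ≤ L * k := by
      calc Real.log a ≤ Real.log (Real.exp (L * k)) := Real.log_le_log ha h1
        _ = L * k := Real.log_exp _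
    have hlb : L * k ≤ Real.log b := by
      calc L * (k:ℝ) = Real.log (Real.exp (L * k)) := (Real.log_exp _).symm
        _ ≤ Real.log b := Real.log_le_log (Real.exp_pos _) h2
    constructor
    · rw [Int.ceil_le, div_le_iff₀ hL, mul_comm]; exact hla
    · rw [Int.le_floor, le_div_iff₀ hL, mul_comm]; exact hlb
  refine ⟨?_, ?_, hfin, ?_⟩
  · simp only [hkey, norm_mul]
    apply Summable.mul_left
    have hni : Function.Injective (Neg.neg : ℤ → ℤ) := neg_injective
    have := Ff_sum.comp_injective hni
    simpa [Function.comp_def] using this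
  · apply summable_of_finite_support
    apply hfin.subset
    intro k hk
    simp only [Function.mem_support, ne_eq, norm_eq_zero, mul_eq_zero, not_or] at hk
    exact hk.1
  · have h1 : ∑' j : ℤ, mellin g (Complex.I * (τ + 2 * Real.pi * j / L))
        = L * ∑' n : ℤ, 𝓕 f n := by
      calc ∑' j : ℤ, mellin g (Complex.I * (τ + 2 * Real.pi * j / L))
          = ∑' j : ℤ, (L : ℂ) * 𝓕 f (-j) := tsum_congr hkey
        _ = (L : ℂ) * ∑' j : ℤ, 𝓕 f (-j) := tsum_mul_left
        _ = (L : ℂ) * ∑' n : ℤ, 𝓕 f n := by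
            congr 1
            have := (Equiv.neg ℤ).tsum_eq (fun n : ℤ => 𝓕 f n)
            simpa using this
    rw [h1, ← poisson, ← mul_assoc, one_div, inv_mul_cancel₀ hLne, one_mul]
    apply tsum_congr
    intro k
    rw [← hfk k]
end

section
/- Define h₊ : ℝ → ℝ by h₊(τ) = −log π + Re ψ(1/4 + iτ/2), and α : ℝ → ℝ by α(τ) = 8√2 · cos(τ·log 2)/(1 + 4τ²) + h₊(τ). Then α is continuous, α(τ) → +∞ as τ → +∞ and as τ → −∞, and consequently there exists ε₀ > 0 such that for every ε with 0 < ε ≤ ε₀ there exists A > 0 with A·cos(ετ) + α(τ) ≥ 0 for all τ ∈ ℝ. -/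
open Filter Real

/-- `h₊(τ) = −log π + Re ψ(1/4 + iτ/2)`, where `ψ = Γ'/Γ` is the digamma function. -/
noncomputable def hPlus (τ : ℝ) : ℝ :=
  -Real.log Real.pi + (logDeriv Complex.Gamma (1 / 4 + Complex.I * τ / 2)).re

/-- `α(τ) = 8√2 cos(τ log 2)/(1 + 4τ²) + h₊(τ)`. -/
noncomputable def alphaFn (τ : ℝ) : ℝ :=
  8 * Real.sqrt 2 * Real.cos (τ * Real.log 2) / (1 + 4 * τ ^ 2) + hPlus τ

/-!
Euler's limit `Γ(s) = lim n^s n! / ∏_{j ≤ n} (s + j)` holds locally uniformly on `Re s > 0`: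
writing both sides as Mellin integrals of `e^{-x}` and of its truncation `(1 - x/n)^n`, the error
on a vertical strip `a ≤ Re s ≤ b` is dominated by the (real) errors at `a` and at `b`.
Taking logarithmic derivatives, `ψ(s) = lim (log n - ∑_{j ≤ n} 1/(s + j))`, hence
`Re ψ(σ + it) - ψ(σ) = ∑_j (1/(σ + j) - Re 1/(σ + it + j))`, a series of nonnegative terms,
each at least `1/(2(σ + j))` as soon as `σ + j ≤ |t|`. So `Re ψ(σ + it)` dominates half of a
divergent harmonic sum and tends to `+∞` as `|t| → ∞`; the cosine term of `α` is bounded.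

Then `α` is bounded below by some `-m`, and `A = 2m + 2` works for all `ε` small enough that
`cos(ετ) ≥ 1/2` on the bounded set where `α < A`.
-/

open MeasureTheory Set Topology

noncomputable def truncExpNeg (n : ℕ) : ℝ → ℝ := indicator (Ioc 0 n) fun x => (1 - x / n) ^ n

lemma truncExpNeg_nonneg (n : ℕ) (x : ℝ) : 0 ≤ truncExpNeg n x :=
  indicator_nonneg
    (fun _ hx => pow_nonneg (sub_nonneg.2 (div_le_one_of_le₀ hx.2 n.cast_nonneg)) n) x

lemma truncExpNeg_le_exp (n : ℕ) (x : ℝ) : truncExpNeg n x ≤ Real.exp (-x) := by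
  by_cases hx : x ∈ Ioc (0 : ℝ) n
  · rw [truncExpNeg, indicator_of_mem hx]
    exact one_sub_div_pow_le_exp_neg hx.2
  · rw [truncExpNeg, indicator_of_notMem hx]
    positivity

lemma measurable_truncExpNeg (n : ℕ) : Measurable (truncExpNeg n) :=
  (by fun_prop : Measurable fun x : ℝ => (1 - x / n) ^ n).indicator measurableSet_Ioc

lemma integrableOn_truncExpNeg_mul_cpow {s : ℂ} (hs : 0 < s.re) (n : ℕ) :
    IntegrableOn (fun x : ℝ => (truncExpNeg n x : ℂ) * (x : ℂ) ^ (s - 1)) (Ioi 0) := by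
  refine (Complex.GammaIntegral_convergent hs).norm.mono' ?_ (ae_of_all _ fun x => ?_)
  · exact ((Complex.measurable_ofReal.comp (measurable_truncExpNeg n)).mul
      (by fun_prop)).aestronglyMeasurable
  · rw [norm_mul, norm_mul, Complex.norm_real, Complex.norm_real,
      Real.norm_of_nonneg (truncExpNeg_nonneg n x), Real.norm_of_nonneg (Real.exp_pos _).le]
    gcongr
    exact truncExpNeg_le_exp n x

lemma Complex.GammaSeq_eq_integral_truncExpNeg {s : ℂ} (hs : 0 < s.re) {n : ℕ} (hn : n ≠ 0) :
    GammaSeq s n = ∫ x in Ioi (0 : ℝ), (truncExpNeg n x : ℂ) * (x : ℂ) ^ (s - 1) := by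
  rw [GammaSeq_eq_approx_Gamma_integral hs hn, intervalIntegral.integral_of_le n.cast_nonneg,
    ← Measure.restrict_restrict_of_subset Ioc_subset_Ioi_self,
    ← integral_indicator measurableSet_Ioc]
  refine setIntegral_congr_fun measurableSet_Ioi fun x _ => ?_
  by_cases hx : x ∈ Ioc (0 : ℝ) n <;> simp [truncExpNeg, hx]

lemma Complex.Gamma_sub_GammaSeq_eq_integral {s : ℂ} (hs : 0 < s.re) {n : ℕ} (hn : n ≠ 0) :
    Gamma s - GammaSeq s n =
      ∫ x in Ioi (0 : ℝ), ((Real.exp (-x) - truncExpNeg n x : ℝ) : ℂ) * (x : ℂ) ^ (s - 1) := by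
  rw [Gamma_eq_integral hs, GammaSeq_eq_integral_truncExpNeg hs hn, GammaIntegral,
    ← integral_sub (GammaIntegral_convergent hs) (integrableOn_truncExpNeg_mul_cpow hs n)]
  simp only [ofReal_sub, sub_mul]

lemma norm_exp_sub_truncExpNeg_mul_cpow (n : ℕ) {x : ℝ} (hx : 0 < x) (s : ℂ) :
    ‖((Real.exp (-x) - truncExpNeg n x : ℝ) : ℂ) * (x : ℂ) ^ (s - 1)‖ =
      (Real.exp (-x) - truncExpNeg n x) * x ^ (s.re - 1) := by
  rw [norm_mul, Complex.norm_real, Complex.norm_cpow_eq_rpow_re_of_pos hx, Complex.sub_re,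
    Complex.one_re, Real.norm_of_nonneg (sub_nonneg.2 (truncExpNeg_le_exp n x))]

lemma integrableOn_exp_sub_truncExpNeg_mul_cpow {s : ℂ} (hs : 0 < s.re) (n : ℕ) :
    IntegrableOn (fun x : ℝ => ((Real.exp (-x) - truncExpNeg n x : ℝ) : ℂ) * (x : ℂ) ^ (s - 1))
      (Ioi 0) := by
  simpa only [Complex.ofReal_sub, sub_mul, Pi.sub_def] using
    (Complex.GammaIntegral_convergent hs).sub (integrableOn_truncExpNeg_mul_cpow hs n)

lemma integrableOn_exp_sub_truncExpNeg_mul_rpow {a : ℝ} (ha : 0 < a) (n : ℕ) :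
    IntegrableOn (fun x => (Real.exp (-x) - truncExpNeg n x) * x ^ (a - 1)) (Ioi 0) := by
  refine IntegrableOn.congr_fun (integrableOn_exp_sub_truncExpNeg_mul_cpow (s := a) ha n).norm
    (fun x hx => ?_) measurableSet_Ioi
  rw [norm_exp_sub_truncExpNeg_mul_cpow n hx, Complex.ofReal_re]

lemma Complex.norm_Gamma_sub_GammaSeq_ofReal {a : ℝ} (ha : 0 < a) {n : ℕ} (hn : n ≠ 0) :
    ‖Gamma a - GammaSeq a n‖ =
      ∫ x in Ioi (0 : ℝ), (Real.exp (-x) - truncExpNeg n x) * x ^ (a - 1) := by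
  have hs : 0 < (a : ℂ).re := ha
  rw [Gamma_sub_GammaSeq_eq_integral hs hn,
    setIntegral_congr_fun measurableSet_Ioi fun x (hx : 0 < x) => by
      rw [← ofReal_one, ← ofReal_sub, ← ofReal_cpow hx.le, ← ofReal_mul],
    integral_complex_ofReal, norm_real, Real.norm_of_nonneg (setIntegral_nonneg measurableSet_Ioi
      fun x (hx : 0 < x) => mul_nonneg (sub_nonneg.2 (truncExpNeg_le_exp n x)) (by positivity))]

lemma Complex.norm_Gamma_sub_GammaSeq_le {a b : ℝ} (ha : 0 < a) {s : ℂ} (hs : s.re ∈ Icc a b)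
    {n : ℕ} (hn : n ≠ 0) :
    ‖Gamma s - GammaSeq s n‖ ≤ ‖Gamma a - GammaSeq a n‖ + ‖Gamma b - GammaSeq b n‖ := by
  have hb : 0 < b := ha.trans_le (hs.1.trans hs.2)
  rw [norm_Gamma_sub_GammaSeq_ofReal ha hn, norm_Gamma_sub_GammaSeq_ofReal hb hn,
    ← integral_add (integrableOn_exp_sub_truncExpNeg_mul_rpow ha n)
      (integrableOn_exp_sub_truncExpNeg_mul_rpow hb n),
    Gamma_sub_GammaSeq_eq_integral (ha.trans_le hs.1) hn]
  refine (norm_integral_le_integral_norm _).trans (setIntegral_mono_on ?_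
    ((integrableOn_exp_sub_truncExpNeg_mul_rpow ha n).add
      (integrableOn_exp_sub_truncExpNeg_mul_rpow hb n)) measurableSet_Ioi fun x (hx : 0 < x) => ?_)
  · exact (integrableOn_exp_sub_truncExpNeg_mul_cpow (ha.trans_le hs.1) n).norm
  · rw [norm_exp_sub_truncExpNeg_mul_cpow n hx, ← mul_add]
    refine mul_le_mul_of_nonneg_left ?_ (sub_nonneg.2 (truncExpNeg_le_exp n x))
    rcases le_total x 1 with hx1 | hx1
    · exact (Real.rpow_le_rpow_of_exponent_ge hx hx1 (by linarith [hs.1])).trans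
        (le_add_of_nonneg_right (by positivity))
    · exact (Real.rpow_le_rpow_of_exponent_le hx1 (by linarith [hs.2])).trans
        (le_add_of_nonneg_left (by positivity))

theorem Complex.tendstoUniformlyOn_GammaSeq {a b : ℝ} (ha : 0 < a) :
    TendstoUniformlyOn (fun n s => GammaSeq s n) Gamma atTop {s | s.re ∈ Icc a b} := by
  have hlim : Tendsto (fun n => ‖Gamma a - GammaSeq a n‖ + ‖Gamma b - GammaSeq b n‖)
      atTop (𝓝 0) := by
    simpa using (((tendsto_const_nhds (x := Gamma a)).sub (GammaSeq_tendsto_Gamma a)).norm.add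
      ((tendsto_const_nhds (x := Gamma b)).sub (GammaSeq_tendsto_Gamma b)).norm)
  rw [Metric.tendstoUniformlyOn_iff]
  intro ε hε
  filter_upwards [hlim.eventually (gt_mem_nhds hε), eventually_ne_atTop 0] with n hn hn0 s hs
  rw [dist_eq_norm]
  exact (norm_Gamma_sub_GammaSeq_le ha hs hn0).trans_lt hn

theorem Complex.tendstoLocallyUniformlyOn_GammaSeq :
    TendstoLocallyUniformlyOn (fun n s => GammaSeq s n) Gamma atTop {s | 0 < s.re} := by
  refine tendstoLocallyUniformlyOn_of_forall_exists_nhds fun z (hz : 0 < z.re) =>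
    ⟨{s | s.re ∈ Icc (z.re / 2) (z.re + 1)}, nhdsWithin_le_nhds ?_,
      tendstoUniformlyOn_GammaSeq (half_pos hz)⟩
  exact continuous_re.continuousAt.preimage_mem_nhds (Icc_mem_nhds (by linarith) (by linarith))

lemma Complex.ne_neg_natCast_of_re_pos {s : ℂ} (hs : 0 < s.re) (m : ℕ) : s ≠ -m := by
  rintro rfl
  have : (0 : ℝ) ≤ m := m.cast_nonneg
  simp at hs
  linarith

lemma Complex.logDeriv_GammaSeq {s : ℂ} (hs : ∀ m : ℕ, s ≠ -m) {n : ℕ} (hn : n ≠ 0) :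
    logDeriv (fun z => GammaSeq z n) s = log n - ∑ j ∈ Finset.range (n + 1), (s + j)⁻¹ := by
  have hn0 : (n : ℂ) ≠ 0 := Nat.cast_ne_zero.2 hn
  have hfact : (n.factorial : ℂ) ≠ 0 := Nat.cast_ne_zero.2 n.factorial_ne_zero
  have hsj : ∀ j : ℕ, s + j ≠ 0 := fun j h => hs j (eq_neg_of_add_eq_zero_left h)
  have hpow := (hasStrictDerivAt_const_cpow (x := (n : ℂ)) (y := s) (Or.inl hn0)).hasDerivAt
  have hpow0 : (n : ℂ) ^ s ≠ 0 := cpow_ne_zero_iff.2 (Or.inl hn0)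
  unfold GammaSeq
  rw [logDeriv_div (f := fun z : ℂ => (n : ℂ) ^ z * n.factorial)
      (g := fun z : ℂ => ∏ j ∈ Finset.range (n + 1), (z + (j : ℂ))) s (mul_ne_zero hpow0 hfact)
      (Finset.prod_ne_zero_iff.2 fun j _ => hsj j) (hpow.differentiableAt.mul_const _)
      (DifferentiableAt.fun_finsetProd fun j _ => differentiableAt_id.add_const _),
    logDeriv_mul_const s _ hfact, logDeriv_apply, hpow.deriv,
    logDeriv_prod (fun j _ => hsj j) (fun j _ => differentiableAt_id.add_const _)]
  congr 1
  · field_simp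
  · refine Finset.sum_congr rfl fun j _ => ?_
    rw [logDeriv_apply, deriv_add_const, deriv_id'', one_div]

lemma Complex.differentiableAt_GammaSeq {s : ℂ} (hs : ∀ m : ℕ, s ≠ -m) (n : ℕ) :
    DifferentiableAt ℂ (fun z => GammaSeq z n) s :=
  ((differentiableAt_id.const_cpow (Or.inr (by simpa using hs 0))).mul_const _).div
    (DifferentiableAt.fun_finsetProd fun j _ => differentiableAt_id.add_const _)
    (Finset.prod_ne_zero_iff.2 fun j _ h => hs j (eq_neg_of_add_eq_zero_left h))

theorem Complex.tendsto_digamma_seq {s : ℂ} (hs : 0 < s.re) :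
    Tendsto (fun n : ℕ => log n - ∑ j ∈ Finset.range (n + 1), (s + j)⁻¹) atTop
      (𝓝 (digamma s)) := by
  have hU : IsOpen {z : ℂ | 0 < z.re} := isOpen_lt continuous_const continuous_re
  refine (logDeriv_tendsto hU hs tendstoLocallyUniformlyOn_GammaSeq
    (Eventually.of_forall fun n z hz => (differentiableAt_GammaSeq
      (ne_neg_natCast_of_re_pos hz) n).differentiableWithinAt)
    (Gamma_ne_zero_of_re_pos hs)).congr' ?_
  filter_upwards [eventually_ne_atTop 0] with n hn
  exact logDeriv_GammaSeq (ne_neg_natCast_of_re_pos hs) hn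

lemma Complex.re_inv_le_inv_re {w : ℂ} (hw : 0 < w.re) : (w⁻¹).re ≤ w.re⁻¹ := by
  rw [inv_re, div_le_iff₀ (normSq_pos.2 fun h => hw.ne' (by simp [h])), normSq_apply]
  field_simp
  nlinarith [mul_self_nonneg w.im]

lemma Complex.half_inv_re_le_inv_re_sub_re_inv {w : ℂ} (hw : 0 < w.re) (him : w.re ≤ |w.im|) :
    2⁻¹ * w.re⁻¹ ≤ w.re⁻¹ - (w⁻¹).re := by
  have hsq : w.re ^ 2 ≤ w.im ^ 2 := by simpa using sq_le_sq' (by linarith [neg_abs_le w.im]) him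
  rw [inv_re, normSq_apply]
  have : 0 < w.re * w.re + w.im * w.im := by nlinarith [mul_self_nonneg w.im]
  field_simp
  nlinarith

lemma Complex.re_add_natCast_pos {z : ℂ} (hz : 0 < z.re) (j : ℕ) : 0 < (z + j).re := by
  simp only [add_re, natCast_re]
  positivity

theorem Complex.hasSum_re_digamma_sub {z : ℂ} (hz : 0 < z.re) :
    HasSum (fun j : ℕ => (z.re + j)⁻¹ - ((z + j)⁻¹).re) ((digamma z).re - (digamma z.re).re) := by
  have hre (j : ℕ) : ((z.re : ℂ) + j)⁻¹.re = (z.re + j)⁻¹ := by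
    rw [← ofReal_natCast, ← ofReal_add, ← ofReal_inv, ofReal_re]
  rw [hasSum_iff_tendsto_nat_of_nonneg (fun j => sub_nonneg.2 (by
      simpa using re_inv_le_inv_re (re_add_natCast_pos hz j))), ← tendsto_add_atTop_iff_nat 1]
  refine ((continuous_re.tendsto _).comp ((tendsto_digamma_seq hz).sub
    (tendsto_digamma_seq (s := z.re) hz))).congr fun n => ?_
  simp only [Function.comp_apply, sub_re, re_sum, hre, Finset.sum_sub_distrib]
  ring

lemma Complex.re_digamma_add_sum_le {z : ℂ} (hz : 0 < z.re) {N : ℕ} (hN : z.re + N ≤ |z.im|) :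
    (digamma z.re).re + 2⁻¹ * ∑ j ∈ Finset.range N, (z.re + j)⁻¹ ≤ (digamma z).re := by
  have hsum := sum_le_hasSum (Finset.range N) (fun j _ => sub_nonneg.2 (by
      simpa using re_inv_le_inv_re (re_add_natCast_pos hz j))) (hasSum_re_digamma_sub hz)
  have hterm : ∀ j ∈ Finset.range N, 2⁻¹ * (z.re + j)⁻¹ ≤ (z.re + j)⁻¹ - ((z + j)⁻¹).re := by
    intro j hj
    simpa using half_inv_re_le_inv_re_sub_re_inv (re_add_natCast_pos hz j)
      (by simpa using hN.trans' (by simpa using (Finset.mem_range.1 hj).le))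
  rw [Finset.mul_sum]
  linarith [Finset.sum_le_sum hterm]

lemma tendsto_sum_range_inv_add_atTop {σ : ℝ} (hσ : 0 < σ) :
    Tendsto (fun N => ∑ j ∈ Finset.range N, (σ + j)⁻¹) atTop atTop := by
  refine (not_summable_iff_tendsto_nat_atTop_of_nonneg fun j => by positivity).1 fun h => ?_
  refine absurd ((Real.summable_one_div_nat_add_rpow σ 1).1 ?_) (lt_irrefl 1)
  refine h.congr fun j => ?_
  rw [Real.rpow_one, abs_of_pos (by positivity), one_div, add_comm]

theorem Complex.tendsto_re_digamma_cocompact {σ : ℝ} (hσ : 0 < σ) :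
    Tendsto (fun t : ℝ => (digamma (σ + t * I)).re) (cocompact ℝ) atTop := by
  refine tendsto_atTop.2 fun M => ?_
  obtain ⟨N, hN⟩ := (tendsto_atTop.1 ((tendsto_sum_range_inv_add_atTop hσ).const_mul_atTop
    (by norm_num : (0 : ℝ) < 2⁻¹)) (M - (digamma σ).re)).exists
  filter_upwards [tendsto_norm_cocompact_atTop.eventually_ge_atTop (σ + N)] with t ht
  have hz : 0 < (σ + t * I : ℂ).re := by simpa using hσ
  have := re_digamma_add_sum_le hz (N := N) (by simpa using ht)
  simp only [add_re, ofReal_re, mul_re, I_re, mul_zero, ofReal_im, I_im, mul_one, sub_self,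
    add_zero] at this
  linarith

lemma Complex.continuousAt_digamma {s : ℂ} (hs : 0 < s.re) : ContinuousAt digamma s := by
  have hU : IsOpen {z : ℂ | 0 < z.re} := isOpen_lt continuous_const continuous_re
  have hdiff : DifferentiableOn ℂ Gamma {z : ℂ | 0 < z.re} := fun z hz =>
    (differentiableAt_Gamma z (ne_neg_natCast_of_re_pos hz)).differentiableWithinAt
  have hGamma := hdiff.analyticOnNhd hU
  exact (hGamma.deriv.continuousOn.div hGamma.continuousOn fun z hz =>
    Gamma_ne_zero_of_re_pos hz).continuousAt (hU.mem_nhds hs)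

theorem exists_pos_forall_nonneg_mul_cos_add {f : ℝ → ℝ} (hf : Continuous f)
    (hlim : Tendsto f (cocompact ℝ) atTop) :
    ∃ ε₀ > (0 : ℝ), ∀ ε : ℝ, 0 < ε → ε ≤ ε₀ →
      ∃ A > (0 : ℝ), ∀ τ : ℝ, 0 ≤ A * Real.cos (ε * τ) + f τ := by
  obtain ⟨τ₀, hτ₀⟩ := hf.exists_forall_le hlim
  set A := 2 * |f τ₀| + 2 with hA
  have hA0 : 0 < A := by positivity
  rw [cocompact_eq_atBot_atTop, ← comap_abs_atTop] at hlim
  obtain ⟨R, hR⟩ := eventually_atTop.1 (eventually_comap.1 (hlim.eventually_ge_atTop A))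
  set R' := max R 1
  have hR' : 0 < R' := lt_max_of_lt_right one_pos
  refine ⟨R'⁻¹, inv_pos.2 hR', fun ε hε hεR => ⟨A, hA0, fun τ => ?_⟩⟩
  rcases lt_or_ge |τ| R' with hτ | hτ
  · have hετ : |ε * τ| ≤ 1 := by
      rw [abs_mul, abs_of_pos hε]
      calc ε * |τ| ≤ R'⁻¹ * R' := by gcongr
        _ = 1 := inv_mul_cancel₀ hR'.ne'
    have hcos : 1 / 2 ≤ Real.cos (ε * τ) := by
      nlinarith [Real.one_sub_sq_div_two_le_cos (x := ε * τ), sq_abs (ε * τ), abs_nonneg (ε * τ)]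
    linarith [mul_le_mul_of_nonneg_left hcos hA0.le, hτ₀ τ, neg_abs_le (f τ₀)]
  · linarith [mul_le_mul_of_nonneg_left (Real.neg_one_le_cos (ε * τ)) hA0.le,
      hR |τ| ((le_max_left R 1).trans hτ) τ rfl]

lemma hPlus_eq (τ : ℝ) :
    hPlus τ = -Real.log π + (Complex.digamma ((1 / 4 : ℝ) + (τ * 2⁻¹ : ℝ) * Complex.I)).re := by
  rw [hPlus, Complex.digamma_def]
  push_cast
  ring_nf

lemma continuous_hPlus : Continuous hPlus := by
  rw [funext hPlus_eq, continuous_iff_continuousAt]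
  refine fun τ => continuousAt_const.add (Complex.continuous_re.continuousAt.comp ?_)
  exact (Complex.continuousAt_digamma (by simp)).comp (by fun_prop)

lemma tendsto_hPlus_cocompact : Tendsto hPlus (cocompact ℝ) atTop := by
  rw [funext hPlus_eq]
  exact tendsto_atTop_add_const_left _ _ ((Complex.tendsto_re_digamma_cocompact
    (by norm_num)).comp (tendsto_cocompact_mul_right (b := 2) (by norm_num)))

lemma neg_eight_mul_sqrt_two_le_cos_div (τ : ℝ) :
    -(8 * √2) ≤ 8 * √2 * Real.cos (τ * Real.log 2) / (1 + 4 * τ ^ 2) := by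
  have hd : 1 ≤ 1 + 4 * τ ^ 2 := by nlinarith [sq_nonneg τ]
  rw [le_div_iff₀ (by linarith)]
  nlinarith [Real.neg_one_le_cos (τ * Real.log 2), Real.cos_le_one (τ * Real.log 2),
    Real.sqrt_nonneg 2]

lemma continuous_alphaFn : Continuous alphaFn :=
  .add (.div (by fun_prop) (by fun_prop) fun τ => by positivity) continuous_hPlus

lemma tendsto_alphaFn_cocompact : Tendsto alphaFn (cocompact ℝ) atTop :=
  tendsto_atTop_add_left_of_le _ _ neg_eight_mul_sqrt_two_le_cos_div tendsto_hPlus_cocompact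

/-- The function `α` is continuous, tends to `+∞` at `±∞`, and
consequently there is an `ε₀ > 0` such that for every `0 < ε ≤ ε₀` there is an `A > 0`
with `A cos(ετ) + α(τ) ≥ 0` for all `τ ∈ ℝ`. -/
theorem alphaFn_continuous_tendsto_and_cosine_bound :
    Continuous alphaFn ∧
    Tendsto alphaFn atTop atTop ∧
    Tendsto alphaFn atBot atTop ∧
    ∃ ε₀ > (0 : ℝ), ∀ ε : ℝ, 0 < ε → ε ≤ ε₀ →
      ∃ A > (0 : ℝ), ∀ τ : ℝ, 0 ≤ A * Real.cos (ε * τ) + alphaFn τ :=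
  ⟨continuous_alphaFn, tendsto_alphaFn_cocompact.mono_left atTop_le_cocompact,
    tendsto_alphaFn_cocompact.mono_left atBot_le_cocompact,
    exists_pos_forall_nonneg_mul_cos_add continuous_alphaFn tendsto_alphaFn_cocompact⟩
end
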